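/- Let Z be a standard Gaussian and for integer q ≥ 3 let u_K = 1 − 2^{−q}, z_K = Φ⁻¹(u_K), and Q_K = E[Z | Z ≥ z_K] = 2^q·∫_{z_K}^∞ z·φ(z) dz. Then Q_K − z_K = 2^q·∫_{z_K}^∞ (z − z_K)·φ(z) dz, and asymptotically Q_K − z_K ≤ 7.5·q^{−1/2} for q ≥ 3 sufficiently large. -/

import Mathlib

open Real MeasureTheory

noncomputable def phi (z : ℝ) : ℝ := (Real.sqrt (2 * Real.pi))⁻¹ * Real.exp (-z ^ 2 / 2)

noncomputable def Phi (z : ℝ) : ℝ := ∫ s in Set.Iic z, phi s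

/-!
Write `T a = 1 - Phi a` for the Gaussian tail. Since `φ' s = -s φ s`, `∫_{s ≥ a} s φ s = φ a`, so
when `T z = 2^(-q)` both sides of the identity equal `2^q φ z - z = φ z / T z - z`. Mills' lower
bound `T z ≥ φ z (1/z - 1/z³)`, obtained by integrating `φ s (1 - 3/s⁴) ≤ φ s`, the derivative of
`-φ s (1/s - 1/s³)`, turns this into `2^q φ z - z ≤ z / (z² - 1)`. Finally
`T (√q - 1) ≥ φ √q > 2^(-q)` for `q ≥ 16`, so `z > √q - 1`, which makes `z / (z² - 1) ≤ 7.5 / √q`.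
-/

open Filter Set ProbabilityTheory Topology

lemma phi_eq_gaussianPDFReal : phi = gaussianPDFReal 0 1 := by
  ext z
  simp [phi, gaussianPDFReal]

lemma phi_pos (z : ℝ) : 0 < phi z := by
  rw [phi_eq_gaussianPDFReal]
  exact gaussianPDFReal_pos _ _ _ one_ne_zero

lemma integrable_phi : Integrable phi := by
  rw [phi_eq_gaussianPDFReal]
  exact integrable_gaussianPDFReal _ _

lemma integral_phi : ∫ s, phi s = 1 := by
  rw [phi_eq_gaussianPDFReal]
  exact integral_gaussianPDFReal_eq_one _ one_ne_zero

lemma hasDerivAt_phi (x : ℝ) : HasDerivAt phi (-x * phi x) x := by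
  have h := ((((hasDerivAt_pow 2 x).neg.div_const 2).exp).const_mul (√(2 * π))⁻¹)
  simp only [Pi.neg_apply] at h
  exact h.congr_deriv (by simp only [phi]; push_cast; ring)

lemma tendsto_phi_atTop : Tendsto phi atTop (𝓝 0) := by
  have h : Tendsto (fun z : ℝ => -z ^ 2 / 2) atTop atBot :=
    (tendsto_neg_atTop_atBot.comp (tendsto_pow_atTop two_ne_zero)).atBot_div_const two_pos
  have := (tendsto_exp_atBot.comp h).const_mul (√(2 * π))⁻¹
  rwa [mul_zero] at this

lemma integrable_mul_phi : Integrable fun s => s * phi s := by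
  have h := (integrable_mul_exp_neg_mul_sq (show (0 : ℝ) < 1 / 2 by norm_num)).const_mul
    (√(2 * π))⁻¹
  exact h.congr (Eventually.of_forall fun s => by simp only [phi]; ring_nf)

lemma Phi_mono : Monotone Phi := fun _ _ h =>
  setIntegral_mono_set integrable_phi.integrableOn
    (Eventually.of_forall fun s => (phi_pos s).le) (Eventually.of_forall (Iic_subset_Iic.2 h))

lemma setIntegral_Ici_phi (a : ℝ) : ∫ s in Ici a, phi s = 1 - Phi a := by
  rw [integral_Ici_eq_integral_Ioi, Phi, ← integral_phi,
    ← intervalIntegral.integral_Iic_add_Ioi integrable_phi.integrableOn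
      integrable_phi.integrableOn]
  ring

lemma setIntegral_Ici_mul_phi (a : ℝ) : ∫ s in Ici a, s * phi s = phi a := by
  rw [integral_Ici_eq_integral_Ioi, integral_Ioi_of_hasDerivAt_of_tendsto'
    (fun x _ => ((hasDerivAt_phi x).neg).congr_deriv (by ring))
    integrable_mul_phi.integrableOn tendsto_phi_atTop.neg]
  simp

lemma setIntegral_Ici_sub_mul_phi (a c : ℝ) :
    ∫ s in Ici a, (s - c) * phi s = phi a - c * (1 - Phi a) := by
  simp_rw [sub_mul]
  rw [integral_sub integrable_mul_phi.integrableOn (integrable_phi.integrableOn.const_mul c),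
    integral_const_mul, setIntegral_Ici_mul_phi, setIntegral_Ici_phi]

lemma phi_add_one_le_one_sub_Phi {t : ℝ} (ht : 0 ≤ t) : phi (t + 1) ≤ 1 - Phi t := by
  have hphi : ∀ x ∈ Ioc t (t + 1), phi (t + 1) ≤ phi x := fun x hx => by
    unfold phi
    gcongr
    all_goals linarith [hx.1, hx.2]
  calc phi (t + 1) = phi (t + 1) * volume.real (Ioc t (t + 1)) := by simp
    _ ≤ ∫ s in Ioc t (t + 1), phi s :=
      setIntegral_ge_of_const_le_real measurableSet_Ioc (by simp) hphi
        integrable_phi.integrableOn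
    _ ≤ ∫ s in Ici t, phi s :=
      setIntegral_mono_set integrable_phi.integrableOn
        (Eventually.of_forall fun s => (phi_pos s).le)
        (Eventually.of_forall fun _ hs => mem_Ici.2 (le_of_lt hs.1))
    _ = 1 - Phi t := setIntegral_Ici_phi t

lemma lt_of_one_sub_Phi_lt_phi_add_one {t z : ℝ} (ht : 0 ≤ t)
    (h : 1 - Phi z < phi (t + 1)) : t < z := by
  by_contra! hzt
  linarith [Phi_mono hzt, phi_add_one_le_one_sub_Phi ht]

lemma hasDerivAt_neg_phi_mul_inv_sub_inv_pow_three {x : ℝ} (hx : x ≠ 0) :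
    HasDerivAt (fun s => -(phi s * (s⁻¹ - (s ^ 3)⁻¹))) (phi x * (1 - 3 / x ^ 4)) x := by
  have hinv : HasDerivAt (fun s : ℝ => s⁻¹ - (s ^ 3)⁻¹) (-(x ^ 2)⁻¹ + 3 / x ^ 4) x :=
    ((hasDerivAt_inv hx).sub ((hasDerivAt_pow 3 x).inv (pow_ne_zero 3 hx))).congr_deriv
      (by field_simp; ring)
  exact ((hasDerivAt_phi x).mul hinv).neg.congr_deriv (by field_simp; ring)

lemma phi_mul_inv_sub_inv_pow_three_le_one_sub_Phi {a : ℝ} (ha : 0 < a) :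
    phi a * (a⁻¹ - (a ^ 3)⁻¹) ≤ 1 - Phi a := by
  have hbdd : ∀ᵐ s ∂volume.restrict (Ioi a), ‖1 - 3 / s ^ 4‖ ≤ 1 + 3 / a ^ 4 := by
    filter_upwards [ae_restrict_mem measurableSet_Ioi] with s hs
    have hs0 : 0 < s := ha.trans hs
    have : 3 / s ^ 4 ≤ 3 / a ^ 4 := by gcongr; exact hs.le
    rw [Real.norm_eq_abs, abs_le]
    constructor <;> nlinarith [div_pos three_pos (pow_pos hs0 4)]
  have hint : IntegrableOn (fun s => phi s * (1 - 3 / s ^ 4)) (Ioi a) :=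
    integrable_phi.integrableOn.mul_bdd
      (measurable_const.sub (measurable_const.div (measurable_id.pow_const 4))).aestronglyMeasurable
      hbdd
  have hlim : Tendsto (fun s => -(phi s * (s⁻¹ - (s ^ 3)⁻¹))) atTop (𝓝 0) := by
    simpa using (tendsto_phi_atTop.mul
      (tendsto_inv_atTop_zero.sub (tendsto_pow_atTop (n := 3) (by norm_num)).inv_tendsto_atTop)).neg
  have key := integral_Ioi_of_hasDerivAt_of_tendsto'
    (fun x hx => hasDerivAt_neg_phi_mul_inv_sub_inv_pow_three (ha.trans_le hx).ne') hint hlim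
  rw [zero_sub, neg_neg] at key
  rw [← setIntegral_Ici_phi, integral_Ici_eq_integral_Ioi, ← key]
  refine setIntegral_mono_on hint integrable_phi.integrableOn measurableSet_Ioi fun s hs => ?_
  have : 0 ≤ phi s * (3 / s ^ 4) := mul_nonneg (phi_pos s).le (by positivity)
  linarith [mul_sub (phi s) 1 (3 / s ^ 4)]

lemma phi_div_one_sub_Phi_sub_le {z : ℝ} (hz : 1 < z) :
    phi z / (1 - Phi z) - z ≤ z / (z ^ 2 - 1) := by
  have hz0 : 0 < z := one_pos.trans hz
  have hz2 : 0 < z ^ 2 - 1 := by nlinarith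
  have hmills := phi_mul_inv_sub_inv_pow_three_le_one_sub_Phi hz0
  rw [show z⁻¹ - (z ^ 3)⁻¹ = (z ^ 2 - 1) / z ^ 3 by field_simp] at hmills
  have htail : 0 < 1 - Phi z := lt_of_lt_of_le (by have := phi_pos z; positivity) hmills
  have hratio : phi z / (1 - Phi z) ≤ z ^ 3 / (z ^ 2 - 1) := by
    rw [div_le_div_iff₀ htail hz2, mul_comm (z ^ 3)]
    rwa [mul_div_assoc', div_le_iff₀ (by positivity)] at hmills
  calc phi z / (1 - Phi z) - z ≤ z ^ 3 / (z ^ 2 - 1) - z := by linarith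
    _ = z / (z ^ 2 - 1) := by field_simp; ring

lemma one_lt_two_pow_mul_phi_sqrt {q : ℕ} (hq : 16 ≤ q) : 1 < 2 ^ q * phi √q := by
  have hq' : (16 : ℝ) ≤ q := by exact_mod_cast hq
  have hsqrt : √(2 * π) < 3 := by
    rw [sqrt_lt' three_pos]; nlinarith [pi_lt_four]
  have hexp : 3 ≤ exp (q * (log 2 - 1 / 2)) := by
    nlinarith [add_one_le_exp (q * (log 2 - 1 / 2)), log_two_gt_d9]
  have h2q : (2 : ℝ) ^ q = exp (q * log 2) := by
    rw [← exp_log (two_pos : (0 : ℝ) < 2), ← exp_nat_mul, exp_log two_pos]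
  rw [phi, sq_sqrt (Nat.cast_nonneg q), h2q, mul_left_comm, ← exp_add,
    lt_inv_mul_iff₀ (sqrt_pos.2 (by positivity)), mul_one]
  calc √(2 * π) < 3 := hsqrt
    _ ≤ exp (q * (log 2 - 1 / 2)) := hexp
    _ = exp (q * log 2 + -q / 2) := by ring_nf

lemma one_sub_two_zpow_neg_mem_Ioo {q : ℕ} (hq : q ≠ 0) :
    1 - (2 : ℝ) ^ (-(q : ℤ)) ∈ Ioo (0 : ℝ) 1 := by
  have h : (2 : ℝ) ^ (-(q : ℤ)) < 1 := zpow_lt_one_of_neg₀ one_lt_two (by omega)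
  constructor <;> linarith [zpow_pos (two_pos : (0 : ℝ) < 2) (-(q : ℤ))]

theorem last_interval_conditional_mean (Φinv : ℝ → ℝ)
    (hinv : ∀ y ∈ Set.Ioo (0 : ℝ) 1, Phi (Φinv y) = y) :
    (∀ q : ℕ, 3 ≤ q →
      (2 : ℝ) ^ q * (∫ z in Set.Ici (Φinv (1 - (2 : ℝ) ^ (-(q : ℤ)))), z * phi z) -
          Φinv (1 - (2 : ℝ) ^ (-(q : ℤ))) =
        (2 : ℝ) ^ q *
          ∫ z in Set.Ici (Φinv (1 - (2 : ℝ) ^ (-(q : ℤ)))),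
            (z - Φinv (1 - (2 : ℝ) ^ (-(q : ℤ)))) * phi z) ∧
    ∃ q₀ : ℕ, 3 ≤ q₀ ∧ ∀ q : ℕ, q₀ ≤ q →
      (2 : ℝ) ^ q * (∫ z in Set.Ici (Φinv (1 - (2 : ℝ) ^ (-(q : ℤ)))), z * phi z) -
          Φinv (1 - (2 : ℝ) ^ (-(q : ℤ))) ≤ 7.5 / Real.sqrt q := by
  have htail : ∀ q : ℕ, q ≠ 0 → 1 - Phi (Φinv (1 - (2 : ℝ) ^ (-(q : ℤ)))) = ((2 : ℝ) ^ q)⁻¹ :=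
    fun q hq => by rw [hinv _ (one_sub_two_zpow_neg_mem_Ioo hq), zpow_neg, zpow_natCast]; ring
  refine ⟨fun q hq => ?_, 16, by norm_num, fun q hq => ?_⟩
  · rw [setIntegral_Ici_mul_phi, setIntegral_Ici_sub_mul_phi, htail q (by omega)]
    field_simp
  · set z := Φinv (1 - (2 : ℝ) ^ (-(q : ℤ)))
    have hT := htail q (by omega)
    have hsqrt : 4 ≤ √q := le_sqrt_of_sq_le (by exact_mod_cast (by omega : 4 ^ 2 ≤ q))
    have hz : √q - 1 < z := lt_of_one_sub_Phi_lt_phi_add_one (by linarith) <| by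
      rw [hT, sub_add_cancel, inv_lt_iff_one_lt_mul₀ (by positivity), mul_comm]
      exact one_lt_two_pow_mul_phi_sqrt hq
    rw [setIntegral_Ici_mul_phi]
    calc (2 : ℝ) ^ q * phi z - z = phi z / (1 - Phi z) - z := by rw [hT, div_inv_eq_mul, mul_comm]
      _ ≤ z / (z ^ 2 - 1) := phi_div_one_sub_Phi_sub_le (by linarith)
      _ ≤ 7.5 / √q := by
        rw [div_le_div_iff₀ (by nlinarith) (by positivity)]
        nlinarith
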